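/- Let q(T|X,Y) be a channel from X×Y to T satisfying D(q(T) || q̃(T)) = I(X;Y), and define the channel q'(T|X,Y) by q'(t|x,y) := q(t|T_j^q) q(T_j^q|x,y) for (x,y) ∈ S (where j is the unique index with t ∈ T_j^q, and q(t|T_j^q) := q(t)/q(T_j^q)) and q'(t|x,y) := q(t|x,y) for (x,y) ∈ S^c. Then: (i) for (x,y) ∈ S, q(T_j^q|x,y) = δ_{(x,y) ∈ S_j}; (ii) q'(T) = q(T); (iii) T_j^q = T_j^{q'} for all j; (iv) I_q(X,Y;T) ≥ I_{q'}(X,Y;T), with equality if and only if q(T|X,Y) = q'(T|X,Y). -/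

import Mathlib

noncomputable section

/-- `p` is a probability distribution on the finite set `X × Y`. -/
def IsJointDist {X Y : Type} [Fintype X] [Fintype Y] (p : X → Y → ℝ) : Prop :=
  (∀ x y, 0 ≤ p x y) ∧ (∑ x, ∑ y, p x y) = 1

/-- Marginal distribution `p(X)`. -/
def margX {X Y : Type} [Fintype Y] (p : X → Y → ℝ) (x : X) : ℝ := ∑ y, p x y

/-- Marginal distribution `p(Y)`. -/
def margY {X Y : Type} [Fintype X] (p : X → Y → ℝ) (y : Y) : ℝ := ∑ x, p x y

/-- Mutual information `I(X;Y) = D(p(X,Y) ‖ p(X)p(Y))`. -/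
def miXY {X Y : Type} [Fintype X] [Fintype Y] (p : X → Y → ℝ) : ℝ :=
  ∑ x, ∑ y, p x y * Real.log (p x y / (margX p x * margY p y))

/-- A channel from `A` to the countable bottleneck space `T := ℕ`. -/
def IsChannelNat {A : Type} (κ : A → ℕ → ℝ) : Prop :=
  (∀ a t, 0 ≤ κ a t) ∧ ∀ a, (∑' t, κ a t) = 1

/-- Pushforward of the distribution `w` on `A` through the channel `κ`. -/
def pushNat {A : Type} [Fintype A] (w : A → ℝ) (κ : A → ℕ → ℝ) (t : ℕ) : ℝ :=
  ∑ a, w a * κ a t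

/-- Kullback–Leibler divergence between distributions on `ℕ`. -/
def klNat (u v : ℕ → ℝ) : ℝ := ∑' t, u t * Real.log (u t / v t)

/-- Mutual information between the input (distributed as `w`) and the output of
the channel `κ`, computed from the joint distribution `w(a) κ(t|a)`. -/
def miNat {A : Type} [Fintype A] (w : A → ℝ) (κ : A → ℕ → ℝ) : ℝ :=
  ∑ a, ∑' t, w a * κ a t * Real.log (κ a t / pushNat w κ t)

/-- The joint distribution `p(X,Y)` as a weight on `X × Y`. -/
def jointW {X Y : Type} (p : X → Y → ℝ) : X × Y → ℝ := fun a => p a.1 a.2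

/-- The product of the marginals `p(X)p(Y)` as a weight on `X × Y`. -/
def splitW {X Y : Type} [Fintype X] [Fintype Y] (p : X → Y → ℝ) : X × Y → ℝ :=
  fun a => margX p a.1 * margY p a.2

/-- `κ` solves the Intertwining Information Bottleneck problem with parameter `lam`:
it is a channel satisfying the constraint `D(κ(p(X,Y)) ‖ κ(p(X)p(Y))) = lam` and it
minimises `I_κ(X,Y;T)` among all channels satisfying this constraint. -/
def SolvesIIB {X Y : Type} [Fintype X] [Fintype Y] (p : X → Y → ℝ)
    (κ : X × Y → ℕ → ℝ) (lam : ℝ) : Prop :=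
  IsChannelNat κ ∧
  klNat (pushNat (jointW p) κ) (pushNat (splitW p) κ) = lam ∧
  ∀ κ' : X × Y → ℕ → ℝ, IsChannelNat κ' →
    klNat (pushNat (jointW p) κ') (pushNat (splitW p) κ') = lam →
    miNat (jointW p) κ ≤ miNat (jointW p) κ'

/-- The ratio `p(x,y)/(p(x)p(y))` whose level sets define the equivalence relation `∼`. -/
def ratio {X Y : Type} [Fintype X] [Fintype Y] (p : X → Y → ℝ) (a : X × Y) : ℝ :=
  p a.1 a.2 / (margX p a.1 * margY p a.2)

/-- A channel `γ` is congruent if distinct inputs have disjoint output supports. -/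
def IsCongruentNat {A : Type} (γ : A → ℕ → ℝ) : Prop :=
  ∀ a a', a ≠ a' → Disjoint (Function.support (γ a)) (Function.support (γ a'))

/-- `T_j^q`: the "probabilistic image" of the class `S_j` through the channel `q`,
i.e. the set of `t` achieved with positive probability from some `(x,y) ∈ S_j`. -/
def TjSet {X Y : Type} {n : ℕ} (p : X → Y → ℝ)
    (idx : X × Y → Fin n) (q : X × Y → ℕ → ℝ) (j : Fin n) : Set ℕ :=
  {t | ∃ a : X × Y, jointW p a ≠ 0 ∧ idx a = j ∧ 0 < q a t}

/-- `q(T_j^q)`: the mass of `T_j^q` under the pushforward `q(T)`. -/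
def TjMass {X Y : Type} [Fintype X] [Fintype Y] {n : ℕ} (p : X → Y → ℝ)
    (idx : X × Y → Fin n) (q : X × Y → ℕ → ℝ) (j : Fin n) : ℝ :=
  ∑' t, Set.indicator (TjSet p idx q j) (pushNat (jointW p) q) t

/-- The channel `γ_q` from `{1,…,n}` to `T`, `γ_q(t|j) = (q(t)/q(T_j^q)) δ_{t ∈ T_j^q}`. -/
def gammaq {X Y : Type} [Fintype X] [Fintype Y] {n : ℕ} (p : X → Y → ℝ)
    (idx : X × Y → Fin n) (q : X × Y → ℕ → ℝ) (j : Fin n) (t : ℕ) : ℝ :=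
  Set.indicator (TjSet p idx q j)
    (fun t' => pushNat (jointW p) q t' / TjMass p idx q j) t

/-- `q(T_j^q | x,y)`: the conditional mass of `T_j^q` given the input `(x,y)`. -/
def condMassTj {X Y : Type} {n : ℕ} (p : X → Y → ℝ)
    (idx : X × Y → Fin n) (q : X × Y → ℕ → ℝ) (a : X × Y) (j : Fin n) : ℝ :=
  ∑' t, Set.indicator (TjSet p idx q j) (q a) t

open Classical in
/-- The modified channel `q'`: on the support `S`,
`q'(t|x,y) = q(t|T_j^q) q(T_j^q|x,y)` where `j` is the (unique) index with
`t ∈ T_j^q` (expressed as `∑ j, γ_q(t|j) q(T_j^q|x,y)`), and `q' = q` on `Sᶜ`. -/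
def qprime {X Y : Type} [Fintype X] [Fintype Y] {n : ℕ} (p : X → Y → ℝ)
    (idx : X × Y → Fin n) (q : X × Y → ℕ → ℝ) : X × Y → ℕ → ℝ := fun a t =>
  if jointW p a ≠ 0 then ∑ j, gammaq p idx q j t * condMassTj p idx q a j
  else q a t

/-!
The constraint says that pushing `p(X,Y)` and `p(X)p(Y)` through `q` loses no
Kullback–Leibler divergence. By the equality case of the log-sum inequality, applied at each
output `t`, all inputs `(x,y) ∈ S` that reach `t` have the same ratio `p(x,y)/(p(x)p(y))`,
namely `q(t)/q̃(t)`; hence they lie in one class `S_j`, and the sets `T_j^q` are pairwise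
disjoint. So `q(T|x,y)` is carried by `T_j^q` for `(x,y) ∈ S_j`, which is (i), and
`q'(T|x,y) = γ_q(T|j) := q(T|T_j^q)`. Mixing the `γ_q(T|j)` with weights `p(S_j) = q(T_j^q)`
gives back `q(T)`, hence (ii) and (iii). Finally
`I_q(X,Y;T) - I_{q'}(X,Y;T) = ∑ p(x,y) D(q(T|x,y) ‖ γ_q(T|j))`, which is nonnegative by
Gibbs' inequality and vanishes only if `q(T|x,y) = γ_q(T|j)` on `S`, that is `q = q'`.
-/

open Real InformationTheory Function

theorem mul_log_div_sub_sub_eq_mul_klFun (u : ℝ) {w : ℝ} (hw : w ≠ 0) :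
    u * log (u / w) - (u - w) = w * klFun (u / w) := by
  rw [klFun_apply]
  field_simp
  ring

theorem sub_le_mul_log_div {u w : ℝ} (hu : 0 ≤ u) (hw : 0 ≤ w) (huw : w = 0 → u = 0) :
    u - w ≤ u * log (u / w) := by
  rcases hw.eq_or_lt with rfl | hw
  · simp [huw rfl]
  · have := mul_nonneg hw.le (klFun_nonneg (div_nonneg hu hw.le))
    linarith [mul_log_div_sub_sub_eq_mul_klFun u hw.ne']

theorem mul_log_div_eq_sub_iff {u w : ℝ} (hu : 0 ≤ u) (hw : 0 ≤ w) (huw : w = 0 → u = 0) :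
    u * log (u / w) = u - w ↔ u = w := by
  rcases hw.eq_or_lt with rfl | hw
  · simp [huw rfl]
  · rw [← sub_eq_zero, mul_log_div_sub_sub_eq_mul_klFun u hw.ne', mul_eq_zero,
      klFun_eq_zero_iff (div_nonneg hu hw.le), div_eq_one_iff_eq hw.ne']
    simp [hw.ne']

theorem eq_of_le_of_tsum_eq {ι : Type*} {f g : ι → ℝ} (hfg : f ≤ g) (hf : Summable f)
    (hg : Summable g) (h : ∑' i, f i = ∑' i, g i) : f = g := by
  by_contra hne
  obtain ⟨i, hi⟩ := ne_iff.mp hne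
  exact (Summable.tsum_lt_tsum hfg ((hfg i).lt_of_ne hi) hf hg).ne h

section Gibbs

variable {ι : Type*} {u w : ι → ℝ}

theorem summable_mul_log_div_of_le_mul (hu : 0 ≤ u) (hw : 0 ≤ w) (hsu : Summable u)
    (hsw : Summable w) {C : ℝ} (hC : ∀ i, u i ≤ C * w i) :
    Summable fun i => u i * log (u i / w i) := by
  have hlower : ∀ i, u i - w i ≤ u i * log (u i / w i) := fun i =>
    sub_le_mul_log_div (hu i) (hw i) fun h => le_antisymm (by simpa [h] using hC i) (hu i)
  have hupper : ∀ i, u i * log (u i / w i) ≤ u i * |log C| := by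
    intro i
    rcases (show 0 ≤ u i from hu i).eq_or_lt with h0 | h0
    · simp [← h0]
    have hwi : 0 < w i := (show 0 ≤ w i from hw i).lt_of_ne fun h => by
      linarith [hC i, show C * w i = 0 by rw [← h, mul_zero]]
    have hC' : 0 < C := pos_of_mul_pos_left (h0.trans_le (hC i)) hwi.le
    refine mul_le_mul_of_nonneg_left ?_ h0.le
    exact (log_le_log (by positivity) ((div_le_iff₀ hwi).mpr (hC i))).trans (le_abs_self _)
  have hgap : Summable fun i => u i * log (u i / w i) - (u i - w i) :=
    .of_nonneg_of_le (fun i => sub_nonneg.mpr (hlower i))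
      (fun i => sub_le_sub_right (hupper i) _) ((hsu.mul_right _).sub (hsu.sub hsw))
  simpa using hgap.add (hsu.sub hsw)

theorem tsum_mul_log_div_nonneg (hu : 0 ≤ u) (hw : 0 ≤ w) (huw : ∀ i, w i = 0 → u i = 0)
    (hsu : Summable u) (hsw : Summable w) (hsum : ∑' i, u i = ∑' i, w i) :
    0 ≤ ∑' i, u i * log (u i / w i) := by
  by_cases hs : Summable fun i => u i * log (u i / w i)
  · calc 0 = ∑' i, (u i - w i) := by rw [hsu.tsum_sub hsw, hsum, sub_self]
      _ ≤ _ := (hsu.sub hsw).tsum_le_tsum (fun i => sub_le_mul_log_div (hu i) (hw i) (huw i)) hs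
  · rw [tsum_eq_zero_of_not_summable hs]

theorem eq_of_tsum_mul_log_div_eq_zero (hu : 0 ≤ u) (hw : 0 ≤ w) (huw : ∀ i, w i = 0 → u i = 0)
    (hsu : Summable u) (hsw : Summable w) (hsum : ∑' i, u i = ∑' i, w i)
    (hs : Summable fun i => u i * log (u i / w i)) (h : ∑' i, u i * log (u i / w i) = 0) :
    u = w := by
  have hgap := eq_of_le_of_tsum_eq (fun i => sub_le_mul_log_div (hu i) (hw i) (huw i))
    (hsu.sub hsw) hs (by rw [h, hsu.tsum_sub hsw, hsum, sub_self])
  funext i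
  exact (mul_log_div_eq_sub_iff (hu i) (hw i) (huw i)).mp (congrFun hgap i).symm

end Gibbs

section LogSum

variable {A : Type*} [Fintype A] {u v : A → ℝ}

theorem sum_mul_log_div_const_mul {c : ℝ} (hc : c ≠ 0) (huv : ∀ a, v a = 0 → u a = 0) :
    ∑ a, u a * log (u a / (c * v a)) = ∑ a, u a * log (u a / v a) - (∑ a, u a) * log c := by
  rw [Finset.sum_mul, ← Finset.sum_sub_distrib]
  refine Finset.sum_congr rfl fun a _ => ?_
  by_cases hua : u a = 0
  · simp [hua]
  have hva : v a ≠ 0 := fun h => hua (huv a h)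
  rw [← mul_sub, ← log_div (by positivity) hc]
  congr 2
  field_simp

/-- The log-sum inequality and its equality case. -/
theorem sum_mul_log_div_sum_le_and_eq (hu : 0 ≤ u) (hv : 0 ≤ v) (huv : ∀ a, v a = 0 → u a = 0) :
    (∑ a, u a) * log ((∑ a, u a) / ∑ a, v a) ≤ ∑ a, u a * log (u a / v a) ∧
    (∑ a, u a * log (u a / v a) = (∑ a, u a) * log ((∑ a, u a) / ∑ a, v a) →
      ∀ a, u a * ∑ b, v b = v a * ∑ b, u b) := by
  set U := ∑ a, u a
  set V := ∑ a, v a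
  rcases (Finset.sum_nonneg fun a _ => hu a : 0 ≤ U).eq_or_lt with hU | hU
  · have hu0 : ∀ a, u a = 0 := fun a =>
      (Finset.sum_eq_zero_iff_of_nonneg fun a _ => hu a).mp hU.symm a (Finset.mem_univ a)
    have hU0 : U = 0 := by simp [U, hu0]
    simp [hu0, hU0]
  have hV : 0 < V := (Finset.sum_nonneg fun a _ => hv a).lt_of_ne fun hV => hU.ne' <|
    Finset.sum_eq_zero fun a _ => huv a <|
      (Finset.sum_eq_zero_iff_of_nonneg fun a _ => hv a).mp hV.symm a (Finset.mem_univ a)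
  have hw : 0 ≤ fun a => U / V * v a := fun a => mul_nonneg (by positivity) (hv a)
  have huw : ∀ a, U / V * v a = 0 → u a = 0 := fun a h =>
    huv a ((mul_eq_zero.mp h).resolve_left (by positivity))
  have hsum : ∑' a, u a = ∑' a, U / V * v a := by
    rw [tsum_fintype, tsum_fintype, ← Finset.mul_sum]
    field_simp
    rfl
  have hdecomp := sum_mul_log_div_const_mul (u := u) (div_pos hU hV).ne' huv
  have hgibbs := tsum_mul_log_div_nonneg hu hw huw .of_finite .of_finite hsum
  rw [tsum_fintype, hdecomp] at hgibbs
  refine ⟨by linarith, fun heq a => ?_⟩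
  have hprop := eq_of_tsum_mul_log_div_eq_zero hu hw huw .of_finite .of_finite hsum .of_finite
    (by rw [tsum_fintype, hdecomp, heq, sub_self])
  rw [congrFun hprop a]
  field_simp

end LogSum

theorem IsChannelNat.summable {A : Type} {κ : A → ℕ → ℝ} (hκ : IsChannelNat κ) (a : A) :
    Summable (κ a) := by
  by_contra h
  simpa [tsum_eq_zero_of_not_summable h] using hκ.2 a

section Pushforward

variable {A : Type} [Fintype A] {w v : A → ℝ} {κ : A → ℕ → ℝ}

theorem mul_le_pushNat (hw : 0 ≤ w) (hκ : 0 ≤ κ) (a : A) (t : ℕ) :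
    w a * κ a t ≤ pushNat w κ t :=
  Finset.single_le_sum (f := fun b => w b * κ b t) (fun b _ => mul_nonneg (hw b) (hκ b t))
    (Finset.mem_univ a)

theorem pushNat_nonneg (hw : 0 ≤ w) (hκ : 0 ≤ κ) : 0 ≤ pushNat w κ := fun t =>
  Finset.sum_nonneg fun a _ => mul_nonneg (hw a) (hκ a t)

theorem summable_pushNat (hκ : IsChannelNat κ) : Summable (pushNat w κ) :=
  summable_sum fun a _ => (hκ.summable a).mul_left (w a)

theorem tsum_pushNat_mul (hκ : IsChannelNat κ) (f : A → ℝ) :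
    ∑' t, ∑ a, w a * κ a t * f a = ∑ a, w a * f a := by
  rw [Summable.tsum_finsetSum fun a _ => ((hκ.summable a).mul_left (w a)).mul_right (f a)]
  simp_rw [tsum_mul_right, tsum_mul_left, hκ.2, mul_one]

theorem pushNat_le_mul_pushNat (hw : 0 ≤ w) (hv : 0 ≤ v) (hwv : ∀ a, v a = 0 → w a = 0)
    (hκ : 0 ≤ κ) (t : ℕ) :
    pushNat w κ t ≤ (∑ a, w a / v a) * pushNat v κ t := by
  rw [pushNat, Finset.sum_mul]
  refine Finset.sum_le_sum fun a _ => ?_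
  calc w a * κ a t = w a / v a * (v a * κ a t) := by
        rcases eq_or_ne (v a) 0 with h | h
        · simp [h, hwv a h]
        · field_simp
    _ ≤ w a / v a * pushNat v κ t :=
        mul_le_mul_of_nonneg_left (mul_le_pushNat hv hκ a t) (div_nonneg (hw a) (hv a))

/-- Equality case of the data-processing inequality for the Kullback–Leibler divergence. -/
theorem mul_pushNat_eq_of_klNat_pushNat_eq (hw : 0 ≤ w) (hv : 0 ≤ v)
    (hwv : ∀ a, v a = 0 → w a = 0) (hκ : IsChannelNat κ)
    (h : klNat (pushNat w κ) (pushNat v κ) = ∑ a, w a * log (w a / v a))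
    {a : A} {t : ℕ} (hat : κ a t ≠ 0) :
    w a * pushNat v κ t = v a * pushNat w κ t := by
  set f : ℕ → ℝ := fun t => ∑ a, w a * κ a t * log (w a / v a)
  set g : ℕ → ℝ := fun t => pushNat w κ t * log (pushNat w κ t / pushNat v κ t)
  have hwκ : ∀ t, 0 ≤ fun a => w a * κ a t := fun t a => mul_nonneg (hw a) (hκ.1 a t)
  have hvκ : ∀ t, 0 ≤ fun a => v a * κ a t := fun t a => mul_nonneg (hv a) (hκ.1 a t)
  have hwvκ : ∀ t a, v a * κ a t = 0 → w a * κ a t = 0 := fun t a h => by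
    rcases mul_eq_zero.mp h with h | h <;> simp [h, hwv]
  have hcancel : ∀ t, ∑ a, w a * κ a t * log (w a * κ a t / (v a * κ a t)) = f t := fun t =>
    Finset.sum_congr rfl fun a _ => by
      rcases eq_or_ne (κ a t) 0 with h | h
      · simp [h]
      · rw [mul_div_mul_right _ _ h]
  have hlogsum := fun t => sum_mul_log_div_sum_le_and_eq (hwκ t) (hvκ t) (hwvκ t)
  have hgf : g = f := by
    refine eq_of_le_of_tsum_eq (fun t => hcancel t ▸ (hlogsum t).1) ?_
      (summable_sum fun a _ => ((hκ.summable a).mul_left _).mul_right _) ?_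
    · exact summable_mul_log_div_of_le_mul (pushNat_nonneg hw hκ.1) (pushNat_nonneg hv hκ.1)
        (summable_pushNat hκ) (summable_pushNat hκ) (pushNat_le_mul_pushNat hw hv hwv hκ.1)
    · exact h.trans (tsum_pushNat_mul hκ _).symm
  have hprop := (hlogsum t).2 ((hcancel t).trans (congrFun hgf t).symm) a
  exact mul_right_cancel₀ hat (by simpa [pushNat, mul_right_comm] using hprop)

end Pushforward

theorem miNat_eq_sum_mul_tsum {A : Type} [Fintype A] (w : A → ℝ) (κ : A → ℕ → ℝ) :
    miNat w κ = ∑ a, w a * ∑' t, κ a t * log (κ a t / pushNat w κ t) := by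
  simp_rw [miNat, ← tsum_mul_left, mul_assoc]

section Constraint

variable {X Y : Type} [Fintype X] [Fintype Y] {p : X → Y → ℝ}

theorem jointW_nonneg (hp : IsJointDist p) : 0 ≤ jointW p := fun a => hp.1 a.1 a.2

theorem splitW_pos (hp : IsJointDist p) (hX : ∀ x, margX p x ≠ 0) (hY : ∀ y, margY p y ≠ 0)
    (a : X × Y) : 0 < splitW p a :=
  mul_pos ((Finset.sum_nonneg fun y _ => hp.1 a.1 y).lt_of_ne' (hX a.1))
    ((Finset.sum_nonneg fun x _ => hp.1 x a.2).lt_of_ne' (hY a.2))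

theorem miXY_eq_sum : miXY p = ∑ a, jointW p a * log (jointW p a / splitW p a) :=
  (Fintype.sum_prod_type fun a => jointW p a * log (jointW p a / splitW p a)).symm

theorem ratio_eq_of_klNat_eq_miXY (hp : IsJointDist p) (hX : ∀ x, margX p x ≠ 0)
    (hY : ∀ y, margY p y ≠ 0) {q : X × Y → ℕ → ℝ} (hq : IsChannelNat q)
    (hconstraint : klNat (pushNat (jointW p) q) (pushNat (splitW p) q) = miXY p)
    {a : X × Y} {t : ℕ} (ha : jointW p a ≠ 0) (hat : q a t ≠ 0) :
    ratio p a = pushNat (jointW p) q t / pushNat (splitW p) q t := by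
  have hs := splitW_pos hp hX hY
  have hkey := mul_pushNat_eq_of_klNat_pushNat_eq (jointW_nonneg hp) (fun a => (hs a).le)
    (fun a h => absurd h (hs a).ne') hq (hconstraint.trans miXY_eq_sum) hat
  have hQ : 0 < pushNat (jointW p) q t :=
    (mul_pos ((jointW_nonneg hp a).lt_of_ne' ha) ((hq.1 a t).lt_of_ne' hat)).trans_le
      (mul_le_pushNat (jointW_nonneg hp) hq.1 a t)
  have hQ' : pushNat (splitW p) q t ≠ 0 := fun h => by
    rw [h, mul_zero] at hkey
    exact (mul_pos (hs a) hQ).ne hkey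
  rw [show ratio p a = jointW p a / splitW p a from rfl, div_eq_div_iff (hs a).ne' hQ']
  exact hkey.trans (mul_comm _ _)

theorem pairwise_disjoint_TjSet (hp : IsJointDist p) (hX : ∀ x, margX p x ≠ 0)
    (hY : ∀ y, margY p y ≠ 0) {n : ℕ} {idx : X × Y → Fin n}
    (hidx : ∀ a b, jointW p a ≠ 0 → jointW p b ≠ 0 → ratio p a = ratio p b → idx a = idx b)
    {q : X × Y → ℕ → ℝ} (hq : IsChannelNat q)
    (hconstraint : klNat (pushNat (jointW p) q) (pushNat (splitW p) q) = miXY p) :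
    Pairwise (Disjoint on TjSet p idx q) := by
  intro j k hjk
  refine Set.disjoint_left.mpr ?_
  rintro t ⟨a, ha, rfl, hat⟩ ⟨b, hb, rfl, hbt⟩
  exact hjk <| hidx a b ha hb <| by
    rw [ratio_eq_of_klNat_eq_miXY hp hX hY hq hconstraint ha hat.ne',
      ratio_eq_of_klNat_eq_miXY hp hX hY hq hconstraint hb hbt.ne']

end Constraint

section Classes

variable {X Y : Type} {p : X → Y → ℝ} {n : ℕ} {idx : X × Y → Fin n}
  {q : X × Y → ℕ → ℝ}

theorem support_subset_TjSet (hq : 0 ≤ q) {a : X × Y} (ha : jointW p a ≠ 0) :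
    support (q a) ⊆ TjSet p idx q (idx a) :=
  fun t hat => ⟨a, ha, rfl, (show 0 ≤ q a t from hq a t).lt_of_ne' hat⟩

theorem indicator_TjSet_of_ne_zero (hq : 0 ≤ q) (hdisj : Pairwise (Disjoint on TjSet p idx q))
    {a : X × Y} (ha : jointW p a ≠ 0) (j : Fin n) :
    (TjSet p idx q j).indicator (q a) = if idx a = j then q a else 0 := by
  split_ifs with h
  · exact Set.indicator_eq_self.mpr (h ▸ support_subset_TjSet hq ha)
  · exact Set.indicator_eq_zero'.mpr ((hdisj h).mono_left (support_subset_TjSet hq ha))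

theorem condMassTj_of_ne_zero (hq : IsChannelNat q) (hdisj : Pairwise (Disjoint on TjSet p idx q))
    {a : X × Y} (ha : jointW p a ≠ 0) (j : Fin n) :
    condMassTj p idx q a j = if idx a = j then 1 else 0 := by
  rw [condMassTj, indicator_TjSet_of_ne_zero hq.1 hdisj ha]
  split_ifs
  · exact hq.2 a
  · exact tsum_zero

variable [Fintype X] [Fintype Y]

theorem indicator_TjSet_pushNat (hq : 0 ≤ q) (hdisj : Pairwise (Disjoint on TjSet p idx q))
    (j : Fin n) (t : ℕ) :
    (TjSet p idx q j).indicator (pushNat (jointW p) q) t =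
      ∑ a, if idx a = j then jointW p a * q a t else 0 := by
  have hpush : pushNat (jointW p) q = ∑ a, fun t => jointW p a * q a t := by
    ext t
    simp [pushNat]
  rw [hpush, Finset.indicator_sum, Finset.sum_apply]
  refine Finset.sum_congr rfl fun a _ => ?_
  rw [Set.indicator_const_mul]
  rcases eq_or_ne (jointW p a) 0 with h | h
  · simp [h]
  · rw [indicator_TjSet_of_ne_zero hq hdisj h]
    split_ifs <;> simp

theorem sum_indicator_TjSet_pushNat (hq : 0 ≤ q) (hdisj : Pairwise (Disjoint on TjSet p idx q))
    (t : ℕ) :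
    ∑ j, (TjSet p idx q j).indicator (pushNat (jointW p) q) t = pushNat (jointW p) q t := by
  simp_rw [indicator_TjSet_pushNat hq hdisj]
  rw [Finset.sum_comm]
  simp [pushNat]

theorem TjMass_eq_sum (hq : IsChannelNat q) (hdisj : Pairwise (Disjoint on TjSet p idx q))
    (j : Fin n) : TjMass p idx q j = ∑ a, if idx a = j then jointW p a else 0 := by
  rw [TjMass, tsum_congr (indicator_TjSet_pushNat hq.1 hdisj j),
    Summable.tsum_finsetSum fun a _ => by
      split_ifs
      exacts [(hq.summable a).mul_left _, summable_zero]]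
  refine Finset.sum_congr rfl fun a _ => ?_
  split_ifs
  · rw [tsum_mul_left, hq.2, mul_one]
  · exact tsum_zero

theorem TjMass_pos (hp : 0 ≤ jointW p) (hq : IsChannelNat q)
    (hdisj : Pairwise (Disjoint on TjSet p idx q))
    (hsurj : ∀ j, ∃ a, jointW p a ≠ 0 ∧ idx a = j) (j : Fin n) : 0 < TjMass p idx q j := by
  obtain ⟨a, ha, rfl⟩ := hsurj j
  rw [TjMass_eq_sum hq hdisj]
  refine Finset.sum_pos' (fun b _ => ?_) ⟨a, Finset.mem_univ a, ?_⟩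
  · split_ifs
    exacts [hp b, le_rfl]
  · rw [if_pos rfl]
    exact (hp a).lt_of_ne' ha

theorem gammaq_eq_indicator_div (j : Fin n) (t : ℕ) :
    gammaq p idx q j t =
      (TjSet p idx q j).indicator (pushNat (jointW p) q) t / TjMass p idx q j := by
  by_cases ht : t ∈ TjSet p idx q j <;> simp [gammaq, ht]

theorem pushNat_pos_of_mem_TjSet (hp : 0 ≤ jointW p) (hq : 0 ≤ q) {j : Fin n} {t : ℕ}
    (ht : t ∈ TjSet p idx q j) : 0 < pushNat (jointW p) q t := by
  obtain ⟨a, ha, -, hat⟩ := ht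
  exact (mul_pos ((hp a).lt_of_ne' ha) hat).trans_le (mul_le_pushNat hp hq a t)

theorem gammaq_pos_iff (hp : 0 ≤ jointW p) (hq : 0 ≤ q) {j : Fin n}
    (hM : 0 < TjMass p idx q j) {t : ℕ} : 0 < gammaq p idx q j t ↔ t ∈ TjSet p idx q j := by
  by_cases ht : t ∈ TjSet p idx q j
  · simpa [gammaq, ht] using div_pos (pushNat_pos_of_mem_TjSet hp hq ht) hM
  · simp [gammaq, ht]

theorem gammaq_nonneg (hp : 0 ≤ jointW p) (hq : 0 ≤ q) {j : Fin n} (hM : 0 < TjMass p idx q j) :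
    0 ≤ gammaq p idx q j := fun t => by
  by_cases ht : t ∈ TjSet p idx q j
  · exact ((gammaq_pos_iff hp hq hM).mpr ht).le
  · simp [gammaq, ht]

theorem summable_gammaq (hq : IsChannelNat q) (j : Fin n) : Summable (gammaq p idx q j) :=
  (((summable_pushNat hq).indicator _).div_const _).congr fun t =>
    (gammaq_eq_indicator_div j t).symm

theorem tsum_gammaq {j : Fin n} (hM : TjMass p idx q j ≠ 0) : ∑' t, gammaq p idx q j t = 1 := by
  simp_rw [gammaq_eq_indicator_div, tsum_div_const]
  exact div_self hM

theorem qprime_of_ne_zero (hq : IsChannelNat q) (hdisj : Pairwise (Disjoint on TjSet p idx q))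
    {a : X × Y} (ha : jointW p a ≠ 0) : qprime p idx q a = gammaq p idx q (idx a) := by
  funext t
  simp [qprime, ha, condMassTj_of_ne_zero hq hdisj ha]

theorem qprime_of_eq_zero {a : X × Y} (ha : jointW p a = 0) : qprime p idx q a = q a := by
  funext t
  simp [qprime, ha]

theorem pushNat_qprime (hq : IsChannelNat q) (hdisj : Pairwise (Disjoint on TjSet p idx q))
    (hM : ∀ j, TjMass p idx q j ≠ 0) :
    pushNat (jointW p) (qprime p idx q) = pushNat (jointW p) q := by
  funext t
  calc pushNat (jointW p) (qprime p idx q) t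
      = ∑ a, jointW p a * gammaq p idx q (idx a) t := Finset.sum_congr rfl fun a _ => by
        rcases eq_or_ne (jointW p a) 0 with ha | ha
        · simp [ha]
        · rw [qprime_of_ne_zero hq hdisj ha]
    _ = ∑ j, TjMass p idx q j * gammaq p idx q j t := by
        simp_rw [TjMass_eq_sum hq hdisj, Finset.sum_mul, ite_mul, zero_mul]
        rw [Finset.sum_comm]
        simp
    _ = ∑ j, (TjSet p idx q j).indicator (pushNat (jointW p) q) t := by
        simp_rw [gammaq_eq_indicator_div, mul_div_cancel₀ _ (hM _)]
    _ = pushNat (jointW p) q t := sum_indicator_TjSet_pushNat hq.1 hdisj t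

theorem TjSet_qprime (hp : 0 ≤ jointW p) (hq : IsChannelNat q)
    (hdisj : Pairwise (Disjoint on TjSet p idx q)) (hM : ∀ j, 0 < TjMass p idx q j) (j : Fin n) :
    TjSet p idx (qprime p idx q) j = TjSet p idx q j := by
  ext t
  constructor
  · rintro ⟨a, ha, rfl, hat⟩
    rw [qprime_of_ne_zero hq hdisj ha] at hat
    exact (gammaq_pos_iff hp hq.1 (hM _)).mp hat
  · intro ht
    obtain ⟨a, ha, rfl, -⟩ := id ht
    refine ⟨a, ha, rfl, ?_⟩
    rw [qprime_of_ne_zero hq hdisj ha]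
    exact (gammaq_pos_iff hp hq.1 (hM _)).mpr ht

theorem le_mul_gammaq (hp : 0 ≤ jointW p) (hq : 0 ≤ q) {a : X × Y} (ha : jointW p a ≠ 0)
    (hM : 0 < TjMass p idx q (idx a)) (t : ℕ) :
    q a t ≤ TjMass p idx q (idx a) / jointW p a * gammaq p idx q (idx a) t := by
  by_cases hat : q a t = 0
  · rw [hat]
    exact mul_nonneg (div_nonneg hM.le (hp a)) (gammaq_nonneg hp hq hM t)
  rw [gammaq, Set.indicator_of_mem (support_subset_TjSet hq ha hat), div_mul_div_comm,
    mul_comm (TjMass p idx q (idx a)), mul_div_mul_right _ _ hM.ne',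
    le_div_iff₀' ((hp a).lt_of_ne' ha)]
  exact mul_le_pushNat hp hq a t

theorem tsum_gammaq_mul_log_div (hp : 0 ≤ jointW p) (hq : IsChannelNat q) {j : Fin n}
    (hM : 0 < TjMass p idx q j) :
    ∑' t, gammaq p idx q j t * log (gammaq p idx q j t / pushNat (jointW p) q t) =
      -log (TjMass p idx q j) := by
  have hterm : ∀ t, gammaq p idx q j t * log (gammaq p idx q j t / pushNat (jointW p) q t) =
      gammaq p idx q j t * -log (TjMass p idx q j) := fun t => by
    by_cases ht : t ∈ TjSet p idx q j
    · have hQ := pushNat_pos_of_mem_TjSet hp hq.1 ht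
      rw [gammaq, Set.indicator_of_mem ht, div_div_cancel_left' hQ.ne', log_inv]
    · simp [gammaq, ht]
  rw [tsum_congr hterm, tsum_mul_right, tsum_gammaq hM.ne', one_mul]

theorem summable_mul_log_div_gammaq (hp : 0 ≤ jointW p) (hq : IsChannelNat q) {a : X × Y}
    (ha : jointW p a ≠ 0)
    (hM : 0 < TjMass p idx q (idx a)) :
    Summable fun t => q a t * log (q a t / gammaq p idx q (idx a) t) :=
  summable_mul_log_div_of_le_mul (hq.1 a) (gammaq_nonneg hp hq.1 hM) (hq.summable a)
    (summable_gammaq hq _) (le_mul_gammaq hp hq.1 ha hM)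

theorem tsum_mul_log_div_pushNat (hp : 0 ≤ jointW p) (hq : IsChannelNat q) {a : X × Y}
    (ha : jointW p a ≠ 0)
    (hM : 0 < TjMass p idx q (idx a)) :
    ∑' t, q a t * log (q a t / pushNat (jointW p) q t) =
      klNat (q a) (gammaq p idx q (idx a)) - log (TjMass p idx q (idx a)) := by
  have hterm : ∀ t, q a t * log (q a t / pushNat (jointW p) q t) =
      q a t * log (q a t / gammaq p idx q (idx a) t) + q a t * -log (TjMass p idx q (idx a)) :=
    fun t => by
      by_cases hat : q a t = 0
      · simp [hat]
      have ht : t ∈ TjSet p idx q (idx a) := support_subset_TjSet hq.1 ha hat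
      have hQ := pushNat_pos_of_mem_TjSet hp hq.1 ht
      rw [gammaq, Set.indicator_of_mem ht, ← mul_add, ← log_inv, ← log_mul (by positivity)
        (by positivity)]
      congr 2
      field_simp
  rw [tsum_congr hterm, (summable_mul_log_div_gammaq hp hq ha hM).tsum_add
    ((hq.summable a).mul_right _), tsum_mul_right, hq.2, one_mul, klNat, sub_eq_add_neg]

theorem miNat_sub_miNat_qprime (hp : 0 ≤ jointW p) (hq : IsChannelNat q)
    (hdisj : Pairwise (Disjoint on TjSet p idx q)) (hM : ∀ j, 0 < TjMass p idx q j) :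
    miNat (jointW p) q - miNat (jointW p) (qprime p idx q) =
      ∑ a, jointW p a * klNat (q a) (gammaq p idx q (idx a)) := by
  rw [miNat_eq_sum_mul_tsum, miNat_eq_sum_mul_tsum,
    pushNat_qprime hq hdisj fun j => (hM j).ne', ← Finset.sum_sub_distrib]
  refine Finset.sum_congr rfl fun a _ => ?_
  rcases eq_or_ne (jointW p a) 0 with ha | ha
  · simp [ha]
  rw [qprime_of_ne_zero hq hdisj ha, tsum_gammaq_mul_log_div hp hq (hM _),
    tsum_mul_log_div_pushNat hp hq ha (hM _)]
  ring

theorem eq_zero_of_gammaq_eq_zero (hp : 0 ≤ jointW p) (hq : 0 ≤ q) {a : X × Y}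
    (ha : jointW p a ≠ 0) (hM : 0 < TjMass p idx q (idx a)) {t : ℕ}
    (ht : gammaq p idx q (idx a) t = 0) : q a t = 0 :=
  le_antisymm (by simpa [ht] using le_mul_gammaq hp hq ha hM t) (hq a t)

theorem klNat_gammaq_nonneg (hp : 0 ≤ jointW p) (hq : IsChannelNat q) {a : X × Y}
    (ha : jointW p a ≠ 0) (hM : 0 < TjMass p idx q (idx a)) :
    0 ≤ klNat (q a) (gammaq p idx q (idx a)) :=
  tsum_mul_log_div_nonneg (hq.1 a) (gammaq_nonneg hp hq.1 hM)
    (fun _ => eq_zero_of_gammaq_eq_zero hp hq.1 ha hM) (hq.summable a) (summable_gammaq hq _)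
    (by rw [hq.2, tsum_gammaq hM.ne'])

theorem eq_gammaq_of_klNat_eq_zero (hp : 0 ≤ jointW p) (hq : IsChannelNat q) {a : X × Y}
    (ha : jointW p a ≠ 0) (hM : 0 < TjMass p idx q (idx a))
    (h : klNat (q a) (gammaq p idx q (idx a)) = 0) : q a = gammaq p idx q (idx a) :=
  eq_of_tsum_mul_log_div_eq_zero (hq.1 a) (gammaq_nonneg hp hq.1 hM)
    (fun _ => eq_zero_of_gammaq_eq_zero hp hq.1 ha hM) (hq.summable a) (summable_gammaq hq _)
    (by rw [hq.2, tsum_gammaq hM.ne']) (summable_mul_log_div_gammaq hp hq ha hM) h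

theorem jointW_mul_klNat_gammaq_nonneg (hp : 0 ≤ jointW p) (hq : IsChannelNat q)
    (hM : ∀ j, 0 < TjMass p idx q j) (a : X × Y) :
    0 ≤ jointW p a * klNat (q a) (gammaq p idx q (idx a)) := by
  rcases eq_or_ne (jointW p a) 0 with ha | ha
  · simp [ha]
  · exact mul_nonneg (hp a) (klNat_gammaq_nonneg hp hq ha (hM _))

theorem miNat_qprime_le (hp : 0 ≤ jointW p) (hq : IsChannelNat q)
    (hdisj : Pairwise (Disjoint on TjSet p idx q)) (hM : ∀ j, 0 < TjMass p idx q j) :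
    miNat (jointW p) (qprime p idx q) ≤ miNat (jointW p) q := by
  rw [← sub_nonneg, miNat_sub_miNat_qprime hp hq hdisj hM]
  exact Finset.sum_nonneg fun a _ => jointW_mul_klNat_gammaq_nonneg hp hq hM a

theorem eq_qprime_of_miNat_eq (hp : 0 ≤ jointW p) (hq : IsChannelNat q)
    (hdisj : Pairwise (Disjoint on TjSet p idx q)) (hM : ∀ j, 0 < TjMass p idx q j)
    (h : miNat (jointW p) q = miNat (jointW p) (qprime p idx q)) : q = qprime p idx q := by
  have hzero := (Finset.sum_eq_zero_iff_of_nonneg fun a _ =>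
    jointW_mul_klNat_gammaq_nonneg hp hq hM a).mp
      (by rw [← miNat_sub_miNat_qprime hp hq hdisj hM, h, sub_self])
  funext a
  rcases eq_or_ne (jointW p a) 0 with ha | ha
  · exact (qprime_of_eq_zero ha).symm
  rw [qprime_of_ne_zero hq hdisj ha]
  exact eq_gammaq_of_klNat_eq_zero hp hq ha (hM _)
    ((mul_eq_zero.mp (hzero a (Finset.mem_univ a))).resolve_left ha)

end Classes

/-- Let `q(T|X,Y)` satisfy `D(q(T) ‖ q̃(T)) = I(X;Y)` and let `q'`
be as above. Then: (i) for `(x,y) ∈ S`, `q(T_j^q|x,y) = δ_{(x,y) ∈ S_j}`;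
(ii) `q'(T) = q(T)`; (iii) `T_j^{q'} = T_j^q` for all `j`;
(iv) `I_q(X,Y;T) ≥ I_{q'}(X,Y;T)`, with equality iff `q = q'`. -/
theorem qprime_properties {X Y : Type} [Fintype X] [Fintype Y]
    (p : X → Y → ℝ) (hp : IsJointDist p)
    (hX : ∀ x, margX p x ≠ 0) (hY : ∀ y, margY p y ≠ 0)
    (n : ℕ) (idx : X × Y → Fin n)
    (hsurj : ∀ j : Fin n, ∃ a : X × Y, jointW p a ≠ 0 ∧ idx a = j)
    (hidx : ∀ a b : X × Y, jointW p a ≠ 0 → jointW p b ≠ 0 →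
      (idx a = idx b ↔ ratio p a = ratio p b))
    (q : X × Y → ℕ → ℝ) (hq : IsChannelNat q)
    (hconstraint : klNat (pushNat (jointW p) q) (pushNat (splitW p) q) = miXY p) :
    (∀ a : X × Y, jointW p a ≠ 0 → ∀ j : Fin n,
        condMassTj p idx q a j = if idx a = j then 1 else 0) ∧
    (∀ t : ℕ, pushNat (jointW p) (qprime p idx q) t = pushNat (jointW p) q t) ∧
    (∀ j : Fin n, TjSet p idx (qprime p idx q) j = TjSet p idx q j) ∧
    (miNat (jointW p) (qprime p idx q) ≤ miNat (jointW p) q ∧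
      (miNat (jointW p) q = miNat (jointW p) (qprime p idx q) ↔ q = qprime p idx q)) := by
  have hp0 := jointW_nonneg hp
  have hdisj := pairwise_disjoint_TjSet hp hX hY (fun a b ha hb => (hidx a b ha hb).mpr) hq
    hconstraint
  have hM := TjMass_pos hp0 hq hdisj hsurj
  exact ⟨fun a ha => condMassTj_of_ne_zero hq hdisj ha,
    congrFun (pushNat_qprime hq hdisj fun j => (hM j).ne'),
    TjSet_qprime hp0 hq hdisj hM,
    miNat_qprime_le hp0 hq hdisj hM,
    ⟨eq_qprime_of_miNat_eq hp0 hq hdisj hM, fun h => h ▸ rfl⟩⟩
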